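/- Let S be an abstract merge tree with display poset D_S = ⋃_{t∈ℝ} S(t)×{t}, ordered by (a,t) ≤ (b,t') iff t ≤ t' and S(t ≤ t')(a) = b, with height h((a,t)) = t. Then d((a,t),(b,t')) := (t̃ − t) + (t̃ − t'), where t̃ = inf{ h(p) : p ∈ D_S, p ≥ (a,t) and p ≥ (b,t') }, defines a pseudo-metric on D_S. -/
import Mathlib


/-- A persistent set: a functor from the poset `(ℝ, ≤)` to `Sets`. -/
structure PersistentSet where
  obj : ℝ → Type
  map : ∀ {s t : ℝ}, s ≤ t → obj s → obj t
  map_id : ∀ (t : ℝ) (x : obj t), map le_rfl x = x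
  map_comp : ∀ {s t u : ℝ} (h₁ : s ≤ t) (h₂ : t ≤ u) (x : obj s),
    map h₂ (map h₁ x) = map (h₁.trans h₂) x

def IsMergeTreeCriticalSet (S : PersistentSet) (C : Finset ℝ) : Prop :=
  (∀ t : ℝ, (∀ c ∈ C, t < c) → IsEmpty (S.obj t)) ∧
  (∀ t : ℝ, (∀ c ∈ C, c < t) → ∃ x : S.obj t, ∀ y : S.obj t, y = x) ∧
  (∀ (s t : ℝ) (h : s ≤ t), (∀ c ∈ C, c < s ∨ t < c) → Function.Bijective (S.map h))

/-- A (finite) abstract merge tree. -/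
def IsAbstractMergeTree (S : PersistentSet) : Prop :=
  (∀ t : ℝ, Finite (S.obj t)) ∧ ∃ C : Finset ℝ, IsMergeTreeCriticalSet S C

/-- The display poset `D_S = ⋃_t S(t) × {t}`. -/
def Display (S : PersistentSet) : Type := Σ _t : ℝ, S.obj _t

/-- The partial order of the display poset: `(a,t) ≤ (b,t')` iff `t ≤ t'` and
`S(t ≤ t')(a) = b`.  The height of `p : Display S` is `p.1`. -/
def DispLe (S : PersistentSet) (p q : Display S) : Prop :=
  ∃ h : p.1 ≤ q.1, S.map h p.2 = q.2

/-- The pseudo-distance `d((a,t),(b,t')) = (t̃ - t) + (t̃ - t')`, where `t̃` is the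
infimum of the heights of common ancestors of the two points. -/
noncomputable def dDisp (S : PersistentSet) (p q : Display S) : ℝ :=
  2 * sInf {t : ℝ | ∃ r : Display S, DispLe S p r ∧ DispLe S q r ∧ r.1 = t} - p.1 - q.1


namespace MTaux

variable (S : PersistentSet)

def A (p q : Display S) : Set ℝ :=
  {t : ℝ | ∃ r : Display S, DispLe S p r ∧ DispLe S q r ∧ r.1 = t}

lemma dispLe_refl (p : Display S) : DispLe S p p := ⟨le_rfl, S.map_id _ _⟩

lemma dispLe_trans {p q r : Display S} (h1 : DispLe S p q) (h2 : DispLe S q r) :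
    DispLe S p r := by
  obtain ⟨h1, e1⟩ := h1; obtain ⟨h2, e2⟩ := h2
  exact ⟨h1.trans h2, by rw [← S.map_comp h1 h2, e1, e2]⟩

lemma bddBelow_A (p q : Display S) : BddBelow (A S p q) := by
  refine ⟨p.1, fun t ht => ?_⟩
  obtain ⟨r, ⟨h, _⟩, _, rfl⟩ := ht; exact h

lemma nonempty_A (hS : IsAbstractMergeTree S) (p q : Display S) : (A S p q).Nonempty := by
  obtain ⟨_, C, hC⟩ := hS
  obtain ⟨M, hM⟩ := (C.finite_toSet).bddAbove
  set t := max (max p.1 q.1) (M + 1) with ht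
  have hc : ∀ c ∈ C, c < t := by
    intro c hc
    have h1 : c ≤ M := hM hc
    have : c < M + 1 := by linarith
    exact lt_of_lt_of_le this (le_max_right _ _)
  obtain ⟨x, hx⟩ := hC.2.1 t hc
  refine ⟨t, ⟨t, x⟩, ⟨le_trans (le_max_left _ _) (le_max_left _ _), hx _⟩,
    ⟨le_trans (le_max_right _ _) (le_max_left _ _), hx _⟩, rfl⟩

lemma sInf_A_self (p : Display S) : sInf (A S p p) = p.1 := by
  have hmem : p.1 ∈ A S p p := ⟨p, dispLe_refl S p, dispLe_refl S p, rfl⟩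
  refine le_antisymm (csInf_le (bddBelow_A S p p) hmem) (le_csInf ⟨p.1, hmem⟩ ?_)
  rintro t ⟨r, ⟨h, _⟩, _, rfl⟩; exact h

lemma A_comm (p q : Display S) : A S p q = A S q p := by
  ext t; constructor <;> rintro ⟨r, h1, h2, rfl⟩ <;> exact ⟨r, h2, h1, rfl⟩

lemma key (p q r : Display S) {t₁ t₂ : ℝ} (ht₁ : t₁ ∈ A S p q) (ht₂ : t₂ ∈ A S q r) :
    sInf (A S p r) ≤ t₁ + t₂ - q.1 := by
  obtain ⟨a, hpa, hqa, rfl⟩ := ht₁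
  obtain ⟨b, hqb, hrb, rfl⟩ := ht₂
  set m := max a.1 b.1 with hm
  set a' : Display S := ⟨m, S.map (le_max_left a.1 b.1) a.2⟩ with ha'
  have hab : S.map (le_max_right a.1 b.1) b.2 = a'.2 := by
    obtain ⟨h1, e1⟩ := hqa
    obtain ⟨h2, e2⟩ := hqb
    show S.map (le_max_right a.1 b.1) b.2 = S.map (le_max_left a.1 b.1) a.2
    rw [← e1, ← e2, S.map_comp, S.map_comp]
  have hmem : m ∈ A S p r := by
    refine ⟨a', dispLe_trans S hpa ⟨le_max_left _ _, rfl⟩,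
      dispLe_trans S hrb ⟨le_max_right _ _, hab⟩, rfl⟩
  have h1 : q.1 ≤ a.1 := hqa.1
  have h2 : q.1 ≤ b.1 := hqb.1
  have : m ≤ a.1 + b.1 - q.1 := max_le (by linarith) (by linarith)
  exact le_trans (csInf_le (bddBelow_A S p r) hmem) this

lemma sInf_triangle (hS : IsAbstractMergeTree S) (p q r : Display S) :
    sInf (A S p r) ≤ sInf (A S p q) + sInf (A S q r) - q.1 := by
  have step : ∀ t₂ ∈ A S q r, sInf (A S p r) ≤ sInf (A S p q) + t₂ - q.1 := by
    intro t₂ ht₂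
    have : sInf (A S p r) - t₂ + q.1 ≤ sInf (A S p q) :=
      le_csInf (nonempty_A S hS p q) fun t₁ ht₁ => by linarith [key S p q r ht₁ ht₂]
    linarith
  have : sInf (A S p r) - sInf (A S p q) + q.1 ≤ sInf (A S q r) :=
    le_csInf (nonempty_A S hS q r) fun t₂ ht₂ => by linarith [step t₂ ht₂]
  linarith

end MTaux

/-- `dDisp` is a pseudo-metric on the display poset of an abstract merge
tree. -/
theorem dDisp_pseudoMetric (S : PersistentSet) (hS : IsAbstractMergeTree S) :
    (∀ p : Display S, dDisp S p p = 0) ∧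
    (∀ p q : Display S, dDisp S p q = dDisp S q p) ∧
    (∀ p q r : Display S, dDisp S p r ≤ dDisp S p q + dDisp S q r) := by
  refine ⟨fun p => ?_, fun p q => ?_, fun p q r => ?_⟩
  · show 2 * sInf (MTaux.A S p p) - p.1 - p.1 = 0
    rw [MTaux.sInf_A_self]; ring
  · show 2 * sInf (MTaux.A S p q) - p.1 - q.1 = 2 * sInf (MTaux.A S q p) - q.1 - p.1
    rw [MTaux.A_comm]; ring
  · show 2 * sInf (MTaux.A S p r) - p.1 - r.1 ≤
      (2 * sInf (MTaux.A S p q) - p.1 - q.1) + (2 * sInf (MTaux.A S q r) - q.1 - r.1)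
    have := MTaux.sInf_triangle S hS p q r
    linarith
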